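/- Let X be a real Banach space with a semi-normalized Markushevich basis (e_i, e*_i), and let n = (n_k) be a strictly increasing sequence of positive integers. Suppose the basis is C_q-n-quasi-greedy (t = 1), and suppose there is M > 0 such that for every ε > 0, every s ∈ ℕ and every N ∈ ℕ there is a finite set B ⊆ ℕ with min B > N, |B| = s, and ‖∑_{i∈B} e_i‖ ≤ (1+ε)·M (this holds whenever some subsequence of (e_i) has a spreading model M-equivalent to the unit vector basis of c_0). Then the basis is K_q-quasi-greedy with K_q ≤ C_q + (C_q + 1)·α_2·M; that is, ‖P_A(x)‖ ≤ (C_q + (C_q + 1)·α_2·M)·‖x‖ for every x ∈ X and every greedy set A for x. -/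

import Mathlib

open Finset

/-- Coordinate projection `P_A x = ∑_{i ∈ A} e*_i(x) • e_i`. -/
noncomputable def proj {X : Type*} [NormedAddCommGroup X] [NormedSpace ℝ X]
    (e : ℕ → X) (f : ℕ → X →L[ℝ] ℝ) (A : Finset ℕ) (x : X) : X :=
  ∑ i ∈ A, f i x • e i

/-- `A` is a `t`-greedy set for `x`:
`min_{i ∈ A} |e*_i(x)| ≥ t · sup_{j ∉ A} |e*_j(x)|`. -/
def IsGreedySet {X : Type*} [NormedAddCommGroup X] [NormedSpace ℝ X]
    (f : ℕ → X →L[ℝ] ℝ) (t : ℝ) (x : X) (A : Finset ℕ) : Prop :=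
  ∀ i ∈ A, ∀ j ∉ A, t * |f j x| ≤ |f i x|

/-!
Let `a` be a threshold for the greedy set `A` of `x`, i.e. `|e*_j(x)| ≤ a ≤ |e*_i(x)|` for
`j ∉ A`, `i ∈ A`; it can be taken `≤ α₂‖x‖`. Since `e*_i(x) → 0`, there is a set `B` of size
`n_k - k` (where `k = |A| ≤ n_k`), lying beyond `A` and beyond the point where the coefficients
of `x` are negligible, with `‖∑_{i ∈ B} e_i‖ ≤ (1+ε)M`. Then `A ∪ B` is a greedy set of size
`n_k` for `y = x - P_B x + a·∑_{i ∈ B} e_i` and `P_A x = P_{A ∪ B} y - a·∑_{i ∈ B} e_i`, so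
`‖P_A x‖ ≤ C‖x‖ + C‖P_B x‖ + (C+1)(1+ε)aM`; let `ε → 0`.
-/

open Filter Topology

def IsQuasiGreedyAlong {X : Type*} [NormedAddCommGroup X] [NormedSpace ℝ X]
    (e : ℕ → X) (f : ℕ → X →L[ℝ] ℝ) (n : ℕ → ℕ) (C : ℝ) : Prop :=
  ∀ (x : X) (A : Finset ℕ), IsGreedySet f 1 x A → (∃ k, A.card = n k) →
    ‖proj e f A x‖ ≤ C * ‖x‖

section Biorthogonal

variable {X : Type*} [NormedAddCommGroup X] [NormedSpace ℝ X] {e : ℕ → X} {f : ℕ → X →L[ℝ] ℝ}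

lemma apply_sum_smul (hbio : ∀ k i, f k (e i) = if k = i then 1 else 0)
    (c : ℕ → ℝ) (B : Finset ℕ) (j : ℕ) :
    f j (∑ i ∈ B, c i • e i) = if j ∈ B then c j else 0 := by
  simp only [map_sum, map_smul, hbio, smul_eq_mul, mul_ite, mul_one, mul_zero]
  exact sum_ite_eq B j c

lemma apply_proj (hbio : ∀ k i, f k (e i) = if k = i then 1 else 0)
    (B : Finset ℕ) (x : X) (j : ℕ) :
    f j (proj e f B x) = if j ∈ B then f j x else 0 :=
  apply_sum_smul hbio _ B j

lemma apply_sum (hbio : ∀ k i, f k (e i) = if k = i then 1 else 0) (B : Finset ℕ) (j : ℕ) :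
    f j (∑ i ∈ B, e i) = if j ∈ B then 1 else 0 := by
  simpa using apply_sum_smul hbio (fun _ => 1) B j

lemma isGreedySet_range_apply_zero (hbio : ∀ k i, f k (e i) = if k = i then 1 else 0)
    (m : ℕ) : IsGreedySet f 1 (e 0) (range m) := by
  intro i hi j hj
  have hj0 : j ≠ 0 := by
    rintro rfl
    simp only [mem_range] at hi hj
    omega
  simp [hbio, hj0]

lemma IsQuasiGreedyAlong.const_nonneg {n : ℕ → ℕ} {C : ℝ} (hqg : IsQuasiGreedyAlong e f n C)
    (hbio : ∀ k i, f k (e i) = if k = i then 1 else 0) : 0 ≤ C := by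
  have he : e 0 ≠ 0 := fun h => by simpa [h] using hbio 0 0
  have hle := hqg (e 0) _ (isGreedySet_range_apply_zero hbio (n 0)) ⟨0, card_range _⟩
  exact nonneg_of_mul_nonneg_left ((norm_nonneg _).trans hle) (norm_pos_iff.2 he)

lemma abs_apply_le_iSup_norm_mul (hb2 : BddAbove (Set.range fun i => ‖f i‖)) (j : ℕ) (x : X) :
    |f j x| ≤ (⨆ i, ‖f i‖) * ‖x‖ :=
  ((f j).le_opNorm x).trans (mul_le_mul_of_nonneg_right (le_ciSup hb2 j) (norm_nonneg x))

lemma IsGreedySet.exists_threshold (hb2 : BddAbove (Set.range fun i => ‖f i‖)) {x : X}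
    {A : Finset ℕ} (hA : IsGreedySet f 1 x A) :
    ∃ a, 0 ≤ a ∧ a ≤ (⨆ i, ‖f i‖) * ‖x‖ ∧ (∀ i ∈ A, a ≤ |f i x|) ∧ ∀ j ∉ A, |f j x| ≤ a := by
  rcases A.eq_empty_or_nonempty with rfl | hne
  · exact ⟨_, (abs_nonneg _).trans (abs_apply_le_iSup_norm_mul hb2 0 x), le_rfl, by simp,
      fun j _ => abs_apply_le_iSup_norm_mul hb2 j x⟩
  · obtain ⟨i₀, hi₀, hmin⟩ := A.exists_min_image (fun i => |f i x|) hne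
    exact ⟨_, abs_nonneg _, abs_apply_le_iSup_norm_mul hb2 i₀ x, hmin,
      fun j hj => by simpa using hA i₀ hi₀ j hj⟩

/-- This holds on the span of `e` and passes to its closure by equicontinuity of the uniformly
bounded `f i`. -/
lemma tendsto_coeff_atTop_zero (hdense : Dense (Submodule.span ℝ (Set.range e) : Set X))
    (hbio : ∀ k i, f k (e i) = if k = i then 1 else 0)
    (hb2 : BddAbove (Set.range fun i => ‖f i‖)) (x : X) :
    Tendsto (fun i => f i x) atTop (𝓝 0) := by
  let S : Submodule ℝ X :=
    { carrier := {z | Tendsto (fun i => f i z) atTop (𝓝 0)}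
      add_mem' := fun {u v} hu hv => by simpa using hu.add hv
      zero_mem' := by simp
      smul_mem' := fun c u hu => by simpa using hu.const_mul c }
  have hspan : Submodule.span ℝ (Set.range e) ≤ S := by
    refine Submodule.span_le.2 (Set.range_subset_iff.2 fun k => ?_)
    refine tendsto_const_nhds.congr' ((eventually_gt_atTop k).mono fun i hi => ?_)
    simp [hbio, hi.ne']
  have hclosed : IsClosed (S : Set X) := by
    have hequi : Equicontinuous ((↑) ∘ f : ℕ → X → ℝ) :=
      ((NormedSpace.equicontinuous_TFAE f).out 7 1).1 hb2
    exact hequi.isClosed_setOfPred_tendsto (f := fun _ => 0) continuous_const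
  exact closure_minimal hspan hclosed (hdense x)

lemma tendsto_coeff_smul_atTop_zero (hdense : Dense (Submodule.span ℝ (Set.range e) : Set X))
    (hbio : ∀ k i, f k (e i) = if k = i then 1 else 0)
    (hb1 : BddAbove (Set.range fun i => ‖e i‖)) (hb2 : BddAbove (Set.range fun i => ‖f i‖))
    (x : X) : Tendsto (fun i => f i x • e i) atTop (𝓝 0) :=
  (tendsto_coeff_atTop_zero hdense hbio hb2 x).zero_smul_isBoundedUnder_le
    hb1.isBoundedUnder_of_range

end Biorthogonal

section Extension

variable {X : Type*} [NormedAddCommGroup X] [NormedSpace ℝ X] {e : ℕ → X} {f : ℕ → X →L[ℝ] ℝ}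
  {n : ℕ → ℕ} {C : ℝ} {x : X} {A : Finset ℕ} {a : ℝ}

lemma IsQuasiGreedyAlong.norm_proj_le_of_disjoint (hqg : IsQuasiGreedyAlong e f n C)
    (hbio : ∀ k i, f k (e i) = if k = i then 1 else 0) (ha : 0 ≤ a)
    (hAin : ∀ i ∈ A, a ≤ |f i x|) (hAout : ∀ j ∉ A, |f j x| ≤ a) {B : Finset ℕ}
    (hAB : Disjoint A B) (hcard : ∃ k, (A ∪ B).card = n k) :
    ‖proj e f A x‖ ≤ C * ‖x‖ + C * ‖proj e f B x‖ + (C + 1) * a * ‖∑ i ∈ B, e i‖ := by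
  have hC := hqg.const_nonneg hbio
  set y := x - proj e f B x + a • ∑ i ∈ B, e i
  have hy : ∀ j, f j y = if j ∈ B then a else f j x := by
    intro j
    simp only [y, map_add, map_sub, map_smul, apply_proj hbio, apply_sum hbio, smul_eq_mul]
    split_ifs <;> ring
  have hgreedy : IsGreedySet f 1 y (A ∪ B) := by
    intro i hi j hj
    rw [mem_union, not_or] at hj
    rw [one_mul, hy j, if_neg hj.2]
    rcases mem_union.1 hi with hiA | hiB
    · rw [hy i, if_neg (disjoint_left.1 hAB hiA)]
      exact (hAout j hj.1).trans (hAin i hiA)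
    · rw [hy i, if_pos hiB, abs_of_nonneg ha]
      exact hAout j hj.1
  have hproj : proj e f (A ∪ B) y = proj e f A x + a • ∑ i ∈ B, e i := by
    rw [proj, sum_union hAB, smul_sum, proj]
    congr 1
    · exact sum_congr rfl fun i hi => by rw [hy i, if_neg (disjoint_left.1 hAB hi)]
    · exact sum_congr rfl fun i hi => by rw [hy i, if_pos hi]
  have hnorm_smul : ‖a • ∑ i ∈ B, e i‖ = a * ‖∑ i ∈ B, e i‖ := by
    rw [norm_smul, Real.norm_of_nonneg ha]
  have hy_le : ‖y‖ ≤ ‖x‖ + ‖proj e f B x‖ + a * ‖∑ i ∈ B, e i‖ :=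
    (norm_add_le _ _).trans (by rw [hnorm_smul]; gcongr; exact norm_sub_le _ _)
  calc ‖proj e f A x‖ = ‖proj e f (A ∪ B) y - a • ∑ i ∈ B, e i‖ := by
        rw [hproj, add_sub_cancel_right]
    _ ≤ C * ‖y‖ + a * ‖∑ i ∈ B, e i‖ := by
        rw [← hnorm_smul]
        exact (norm_sub_le _ _).trans (add_le_add_left (hqg y _ hgreedy hcard) _)
    _ ≤ C * (‖x‖ + ‖proj e f B x‖ + a * ‖∑ i ∈ B, e i‖) + a * ‖∑ i ∈ B, e i‖ := by gcongr
    _ = C * ‖x‖ + C * ‖proj e f B x‖ + (C + 1) * a * ‖∑ i ∈ B, e i‖ := by ring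

lemma IsQuasiGreedyAlong.norm_proj_le_of_c0_sets (hqg : IsQuasiGreedyAlong e f n C)
    (hbio : ∀ k i, f k (e i) = if k = i then 1 else 0) (hn : StrictMono n)
    (hdecay : Tendsto (fun i => f i x • e i) atTop (𝓝 0)) {M : ℝ}
    (hc0 : ∀ ε : ℝ, 0 < ε → ∀ s N : ℕ, ∃ B : Finset ℕ,
      (∀ i ∈ B, N < i) ∧ B.card = s ∧ ‖∑ i ∈ B, e i‖ ≤ (1 + ε) * M)
    (ha : 0 ≤ a) (hAin : ∀ i ∈ A, a ≤ |f i x|) (hAout : ∀ j ∉ A, |f j x| ≤ a) :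
    ‖proj e f A x‖ ≤ C * ‖x‖ + (C + 1) * a * M := by
  have hC := hqg.const_nonneg hbio
  set s := n A.card - A.card
  refine ge_of_tendsto (x := 𝓝[>] 0)
    (f := fun ε => C * ‖x‖ + C * (s * ε) + (C + 1) * a * ((1 + ε) * M))
    ((Continuous.tendsto' (by fun_prop) 0 _ (by ring)).mono_left nhdsWithin_le_nhds)
    (eventually_nhdsWithin_of_forall fun ε (hε : 0 < ε) => ?_)
  obtain ⟨N, hN⟩ :=
    (hdecay.eventually (Metric.closedBall_mem_nhds 0 hε)).exists_forall_of_atTop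
  obtain ⟨B, hBgt, hBcard, hBnorm⟩ := hc0 ε hε s (max N (A.sup id))
  have hAB : Disjoint A B := disjoint_right.2 fun i hiB hiA =>
    (le_sup (f := id) hiA).not_gt ((le_max_right _ _).trans_lt (hBgt i hiB))
  have hcard : (A ∪ B).card = n A.card := by
    rw [card_union_of_disjoint hAB, hBcard]
    exact Nat.add_sub_cancel' hn.le_apply
  have hPB : ‖proj e f B x‖ ≤ s * ε := by
    calc ‖proj e f B x‖ ≤ ∑ _i ∈ B, ε := norm_sum_le_of_le B fun i hi => by
          simpa using hN i ((le_max_left _ _).trans (hBgt i hi).le)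
      _ = s * ε := by rw [sum_const, hBcard, nsmul_eq_mul]
  calc ‖proj e f A x‖
      ≤ C * ‖x‖ + C * ‖proj e f B x‖ + (C + 1) * a * ‖∑ i ∈ B, e i‖ :=
        hqg.norm_proj_le_of_disjoint hbio ha hAin hAout hAB ⟨_, hcard⟩
    _ ≤ C * ‖x‖ + C * (s * ε) + (C + 1) * a * ((1 + ε) * M) := by gcongr

end Extension

theorem stmt_7_general {X : Type*} [NormedAddCommGroup X] [NormedSpace ℝ X]
    (e : ℕ → X) (f : ℕ → X →L[ℝ] ℝ)
    (hdense : Dense (Submodule.span ℝ (Set.range e) : Set X))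
    (hbio : ∀ k i, f k (e i) = if k = i then 1 else 0)
    (hb1 : BddAbove (Set.range fun i => ‖e i‖))
    (hb2 : BddAbove (Set.range fun i => ‖f i‖))
    (n : ℕ → ℕ) (hn : StrictMono n)
    (C : ℝ)
    (hqg : ∀ (x : X) (A : Finset ℕ), IsGreedySet f 1 x A → (∃ k, A.card = n k) →
      ‖proj e f A x‖ ≤ C * ‖x‖)
    (M : ℝ) (hM : 0 < M)
    (hc0 : ∀ ε : ℝ, 0 < ε → ∀ s N : ℕ, ∃ B : Finset ℕ,
      (∀ i ∈ B, N < i) ∧ B.card = s ∧ ‖∑ i ∈ B, e i‖ ≤ (1 + ε) * M) :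
    ∀ (x : X) (A : Finset ℕ), IsGreedySet f 1 x A →
      ‖proj e f A x‖ ≤ (C + (C + 1) * (⨆ i, ‖f i‖) * M) * ‖x‖ := by
  intro x A hA
  have hqg' : IsQuasiGreedyAlong e f n C := hqg
  have hC := hqg'.const_nonneg hbio
  obtain ⟨a, ha, ha_le, hAin, hAout⟩ := hA.exists_threshold hb2
  calc ‖proj e f A x‖ ≤ C * ‖x‖ + (C + 1) * a * M :=
        hqg'.norm_proj_le_of_c0_sets hbio hn
          (tendsto_coeff_smul_atTop_zero hdense hbio hb1 hb2 x) hc0 ha hAin hAout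
    _ ≤ C * ‖x‖ + (C + 1) * ((⨆ i, ‖f i‖) * ‖x‖) * M := by gcongr
    _ = (C + (C + 1) * (⨆ i, ‖f i‖) * M) * ‖x‖ := by ring

/-- If a `C`-`n`-quasi-greedy basis admits, for every `ε > 0`, arbitrarily
far-out finite sets `B` of any prescribed cardinality with
`‖∑_{i ∈ B} e_i‖ ≤ (1+ε)·M` (as happens when a subsequence has a spreading
model `M`-equivalent to the unit vector basis of `c₀`), then the basis is
quasi-greedy with constant at most `C + (C+1)·α₂·M`. -/
theorem stmt_7 {X : Type*} [NormedAddCommGroup X] [NormedSpace ℝ X] [CompleteSpace X]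
    (e : ℕ → X) (f : ℕ → X →L[ℝ] ℝ)
    (hdense : Dense (Submodule.span ℝ (Set.range e) : Set X))
    (hbio : ∀ k i, f k (e i) = if k = i then 1 else 0)
    (htotal : ∀ x : X, (∀ i, f i x = 0) → x = 0)
    (hb1 : BddAbove (Set.range fun i => ‖e i‖))
    (hb2 : BddAbove (Set.range fun i => ‖f i‖))
    (n : ℕ → ℕ) (hn : StrictMono n) (hnpos : ∀ k, 0 < n k)
    (C : ℝ)
    (hqg : ∀ (x : X) (A : Finset ℕ), IsGreedySet f 1 x A → (∃ k, A.card = n k) →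
      ‖proj e f A x‖ ≤ C * ‖x‖)
    (M : ℝ) (hM : 0 < M)
    (hc0 : ∀ ε : ℝ, 0 < ε → ∀ s N : ℕ, ∃ B : Finset ℕ,
      (∀ i ∈ B, N < i) ∧ B.card = s ∧ ‖∑ i ∈ B, e i‖ ≤ (1 + ε) * M) :
    ∀ (x : X) (A : Finset ℕ), IsGreedySet f 1 x A →
      ‖proj e f A x‖ ≤ (C + (C + 1) * (⨆ i, ‖f i‖) * M) * ‖x‖ :=
  stmt_7_general e f hdense hbio hb1 hb2 n hn C hqg M hM hc0
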